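/- (Monotonicity of entropic functionals under projection.) Let 𝒳 = 𝒳⁽¹⁾ × ⋯ × 𝒳⁽ᵈ⁾ be a finite product state space, let ∅ ≠ T ⊆ S ⊆ ⟦d⟧, let π ∈ 𝒫(𝒳) be strictly positive, and let P ∈ ℒ(𝒳) be π-stationary. Then 𝕀^π(P) ≥ 𝕀^{π⁽ˢ⁾}(P⁽ˢ⁾) ≥ 𝕀^{π⁽ᵀ⁾}(P⁽ᵀ⁾), and D_KL^π(P ‖ Π) ≥ D_KL^{π⁽ˢ⁾}(P⁽ˢ⁾ ‖ Π⁽ˢ⁾) ≥ D_KL^{π⁽ᵀ⁾}(P⁽ᵀ⁾ ‖ Π⁽ᵀ⁾), where Π ∈ ℒ(𝒳) is the transition matrix whose every row equals π and Π⁽ˢ⁾ ∈ ℒ(𝒳⁽ˢ⁾) has every row equal to π⁽ˢ⁾. Equalities hold when T = S = ⟦d⟧. -/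

import Mathlib

open Filter Finset
open scoped Classical

/-- `p` is a probability mass on the finite set `Y`. -/
def IsProbMass {Y : Type*} [Fintype Y] (p : Y → ℝ) : Prop :=
  (∀ x, 0 ≤ p x) ∧ ∑ x, p x = 1

/-- `M` is a transition matrix (row-stochastic matrix) on the finite set `Y`. -/
def IsTransMat {Y : Type*} [Fintype Y] (M : Y → Y → ℝ) : Prop :=
  (∀ x y, 0 ≤ M x y) ∧ ∀ x, ∑ y, M x y = 1

/-- The tensor product `⊗ᵢ Lᵢ` of transition matrices on a finite product space. -/
noncomputable def tensorMat {d : ℕ} {X : Fin d → Type*} (L : ∀ i, X i → X i → ℝ) :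
    (∀ i, X i) → (∀ i, X i) → ℝ :=
  fun x y => ∏ i, L i (x i) (y i)

/-- The term `M(x,y)·ln(M(x,y)/L(x,y))` with the conventions `0·ln(0/·) := 0` and
`a·ln(a/0) := +∞` for `a > 0`. -/
noncomputable def klTerm (m l : ℝ) : EReal :=
  if m = 0 then 0 else if l = 0 then ⊤ else ((m * Real.log (m / l) : ℝ) : EReal)

/-- The KL divergence `D_KL^π(M ‖ L)` between transition matrices, with the convention
`0·∞ := 0` (EReal multiplication). -/
noncomputable def klDiv {Y : Type*} [Fintype Y] (π : Y → ℝ) (M L : Y → Y → ℝ) : EReal :=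
  ∑ x, (π x : EReal) * ∑ y, klTerm (M x y) (L x y)

/-- The marginal `π⁽ˢ⁾` of `π` on the coordinates in `S`. -/
noncomputable def margS {d : ℕ} {X : Fin d → Type*} [∀ i, Fintype (X i)]
    (π : (∀ i, X i) → ℝ) (S : Finset (Fin d)) : (∀ j : S, X j.1) → ℝ :=
  fun xs => ∑ x : ∀ i, X i, if ∀ j : S, x j.1 = xs j then π x else 0

/-- The keep-`S`-in transition matrix `P_π⁽ˢ⁾` of `P` with respect to `π`. -/
noncomputable def keepS {d : ℕ} {X : Fin d → Type*} [∀ i, Fintype (X i)]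
    (π : (∀ i, X i) → ℝ) (P : (∀ i, X i) → (∀ i, X i) → ℝ) (S : Finset (Fin d)) :
    (∀ j : S, X j.1) → (∀ j : S, X j.1) → ℝ :=
  fun xs ys =>
    (∑ x : ∀ i, X i, ∑ y : ∀ i, X i,
        if (∀ j : S, x j.1 = xs j) ∧ (∀ j : S, y j.1 = ys j) then π x * P x y else 0) /
      margS π S xs

/-- The distance to independence `𝕀^π(P)` with respect to the KL divergence. -/
noncomputable def distIndepKL {d : ℕ} {X : Fin d → Type*} [∀ i, Fintype (X i)]
    (π : (∀ i, X i) → ℝ) (P : (∀ i, X i) → (∀ i, X i) → ℝ) : EReal :=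
  ⨅ (L : ∀ i, X i → X i → ℝ) (_ : ∀ i, IsTransMat (L i)), klDiv π P (tensorMat L)

/-- The distance to independence `𝕀^μ(Q)` of a transition matrix `Q` on the product
space `𝒳⁽ˢ⁾ = ∏_{j ∈ S} 𝒳⁽ʲ⁾`, with respect to the KL divergence. -/
noncomputable def distIndepOn {d : ℕ} {X : Fin d → Type*} [∀ i, Fintype (X i)]
    (S : Finset (Fin d)) (μ : (∀ j : S, X j.1) → ℝ)
    (Q : (∀ j : S, X j.1) → (∀ j : S, X j.1) → ℝ) : EReal :=
  ⨅ (L : ∀ j : S, X j.1 → X j.1 → ℝ) (_ : ∀ j, IsTransMat (L j)),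
    klDiv μ Q fun xs ys => ∏ j, L j (xs j) (ys j)

/-!
Restricting to the coordinates in `S` is a map `f`, and `π⁽ˢ⁾`, `P⁽ˢ⁾` are the pushforwards of
`π` and of the joint law `π(x) P(x,y)` along `f` and `f × f`. Both functionals are KL divergences
between joint laws, so they can only decrease under such a pushforward: this is the
data-processing inequality, i.e. the log-sum inequality applied on each fibre. The reference
matrices push forward correctly: `Π` goes to `Π⁽ˢ⁾`, and `⊗ᵢ Lᵢ` goes to `⊗_{i ∈ S} Lᵢ` because the
factors outside `S` sum to one. Restriction to `T` factors through restriction to `S`, and for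
`S = ⟦d⟧` the restriction is a bijection, so the inequality also holds in reverse.
-/

theorem EReal.mul_sum_of_nonneg_of_ne_top {ι : Type*} {c : EReal} (hc : 0 ≤ c) (hc' : c ≠ ⊤)
    (s : Finset ι) (f : ι → EReal) : c * ∑ i ∈ s, f i = ∑ i ∈ s, c * f i :=
  map_sum (⟨⟨(c * ·), mul_zero c⟩, EReal.left_distrib_of_nonneg_of_ne_top hc hc'⟩ : EReal →+ EReal)
    f s

theorem EReal.coe_finsetSum {ι : Type*} (s : Finset ι) (f : ι → ℝ) :
    ((∑ i ∈ s, f i : ℝ) : EReal) = ∑ i ∈ s, (f i : EReal) :=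
  map_sum (⟨⟨((↑) : ℝ → EReal), EReal.coe_zero⟩, EReal.coe_add⟩ : ℝ →+ EReal) f s

namespace Real

theorem mul_log_add_sub_le_mul_log_div {a b r : ℝ} (ha : 0 ≤ a) (hb : 0 ≤ b)
    (hab : b = 0 → a = 0) (hr : 0 < r) : a * log r + a - r * b ≤ a * log (a / b) := by
  rcases hb.eq_or_lt with rfl | hb
  · simp [hab rfl]
  rcases ha.eq_or_lt with rfl | ha
  · simp; positivity
  have key : log (r * b / a) ≤ r * b / a - 1 := log_le_sub_one_of_pos (by positivity)
  rw [log_div (by positivity) ha.ne', log_mul hr.ne' hb.ne'] at key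
  rw [log_div ha.ne' hb.ne']
  have h := mul_le_mul_of_nonneg_left key ha.le
  have e : a * (r * b / a - 1) = r * b - a := by field_simp
  linarith

/-- The log-sum inequality. -/
theorem sum_mul_log_div_sum_le {ι : Type*} {s : Finset ι} {a b : ι → ℝ}
    (ha : ∀ i ∈ s, 0 ≤ a i) (hb : ∀ i ∈ s, 0 ≤ b i) (hab : ∀ i ∈ s, b i = 0 → a i = 0) :
    (∑ i ∈ s, a i) * log ((∑ i ∈ s, a i) / ∑ i ∈ s, b i) ≤ ∑ i ∈ s, a i * log (a i / b i) := by
  rcases (sum_nonneg ha).eq_or_lt with hA | hA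
  · have ha0 : ∀ i ∈ s, a i = 0 := (sum_eq_zero_iff_of_nonneg ha).1 hA.symm
    rw [← hA, zero_mul, sum_eq_zero fun i hi => by rw [ha0 i hi, zero_mul]]
  have hB : 0 < ∑ i ∈ s, b i := by
    refine (sum_nonneg hb).lt_of_ne fun hB => hA.ne ?_
    have hb0 := (sum_eq_zero_iff_of_nonneg hb).1 hB.symm
    exact (sum_eq_zero fun i hi => hab i hi (hb0 i hi)).symm
  set r := (∑ i ∈ s, a i) / ∑ i ∈ s, b i
  calc (∑ i ∈ s, a i) * log r = ∑ i ∈ s, (a i * log r + a i - r * b i) := by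
        rw [sum_sub_distrib, sum_add_distrib, ← sum_mul, ← mul_sum, div_mul_cancel₀ _ hB.ne']
        ring
    _ ≤ ∑ i ∈ s, a i * log (a i / b i) :=
        sum_le_sum fun i hi => mul_log_add_sub_le_mul_log_div (ha i hi) (hb i hi) (hab i hi)
          (div_pos hA hB)

end Real

theorem klTerm_ne_bot (m l : ℝ) : klTerm m l ≠ ⊥ := by
  unfold klTerm
  split_ifs
  exacts [EReal.zero_ne_bot, top_ne_bot, EReal.coe_ne_bot _]

theorem klTerm_zero_left (l : ℝ) : klTerm 0 l = 0 := if_pos rfl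

theorem klTerm_of_ne_zero (m : ℝ) {l : ℝ} (hl : l = 0 → m = 0) :
    klTerm m l = ((m * Real.log (m / l) : ℝ) : EReal) := by
  by_cases hm : m = 0
  · simp [hm, klTerm_zero_left]
  · rw [klTerm, if_neg hm, if_neg (mt hl hm)]

theorem klTerm_mul_left {c : ℝ} (hc : 0 ≤ c) (m l : ℝ) :
    klTerm (c * m) (c * l) = c * klTerm m l := by
  rcases hc.eq_or_lt with rfl | hc
  · simp [klTerm_zero_left]
  by_cases hm : m = 0
  · simp [hm, klTerm_zero_left]
  by_cases hl : l = 0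
  · simp [klTerm, hm, hl, hc.ne', EReal.coe_mul_top_of_pos hc]
  rw [klTerm_of_ne_zero _ (by simp [hl, hc.ne']), klTerm_of_ne_zero _ (by simp [hl]),
    mul_div_mul_left _ _ hc.ne', ← EReal.coe_mul, mul_assoc]

theorem klTerm_sum_le {ι : Type*} (s : Finset ι) {a b : ι → ℝ} (ha : ∀ i ∈ s, 0 ≤ a i)
    (hb : ∀ i ∈ s, 0 ≤ b i) :
    klTerm (∑ i ∈ s, a i) (∑ i ∈ s, b i) ≤ ∑ i ∈ s, klTerm (a i) (b i) := by
  by_cases htop : ∃ i ∈ s, a i ≠ 0 ∧ b i = 0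
  · obtain ⟨i, hi, hai, hbi⟩ := htop
    have hrest : ∑ j ∈ s.erase i, klTerm (a j) (b j) ≠ ⊥ := fun h => by
      obtain ⟨j, -, hj⟩ := (WithBot.sum_eq_bot_iff (M := WithTop ℝ)).1 h
      exact klTerm_ne_bot _ _ hj
    refine le_top.trans_eq ?_
    rw [← add_sum_erase s _ hi, klTerm, if_neg hai, if_pos hbi, EReal.top_add_of_ne_bot hrest]
  push Not at htop
  have hab : ∀ i ∈ s, b i = 0 → a i = 0 := fun i hi => not_imp_not.1 (htop i hi)
  have hAB : ∑ i ∈ s, b i = 0 → ∑ i ∈ s, a i = 0 := fun hB =>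
    sum_eq_zero fun i hi => hab i hi ((sum_eq_zero_iff_of_nonneg hb).1 hB i hi)
  rw [klTerm_of_ne_zero _ hAB, sum_congr rfl fun i hi => klTerm_of_ne_zero _ (hab i hi),
    ← EReal.coe_finsetSum, EReal.coe_le_coe_iff]
  exact Real.sum_mul_log_div_sum_le ha hb hab

section Pushforward

variable {A A' B C : Type*} {μ : A → ℝ} {M L : A → A → ℝ}

def jointMass (μ : A → ℝ) (M : A → A → ℝ) (p : A × A) : ℝ := μ p.1 * M p.1 p.2

theorem jointMass_nonneg (hμ : ∀ a, 0 ≤ μ a) (hM : ∀ a a', 0 ≤ M a a') (p : A × A) :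
    0 ≤ jointMass μ M p :=
  mul_nonneg (hμ p.1) (hM p.1 p.2)

variable [Fintype A] [Fintype A']

noncomputable def pushMass (f : A → B) (μ : A → ℝ) (b : B) : ℝ := ∑ a with f a = b, μ a

noncomputable def pushMat (f : A → B) (μ : A → ℝ) (M : A → A → ℝ) (b b' : B) : ℝ :=
  pushMass (Prod.map f f) (jointMass μ M) (b, b') / pushMass f μ b

theorem pushMass_nonneg (f : A → B) (hμ : ∀ a, 0 ≤ μ a) (b : B) : 0 ≤ pushMass f μ b :=
  sum_nonneg fun a _ => hμ a

theorem pushMat_nonneg (f : A → B) (hμ : ∀ a, 0 ≤ μ a) (hM : ∀ a a', 0 ≤ M a a') (b b' : B) :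
    0 ≤ pushMat f μ M b b' :=
  div_nonneg (pushMass_nonneg _ (jointMass_nonneg hμ hM) _) (pushMass_nonneg f hμ b)

theorem pushMass_prodMap (f : A → B) (g : A' → C) (w : A × A' → ℝ) (b : B) (c : C) :
    pushMass (Prod.map f g) w (b, c) = ∑ a with f a = b, ∑ a' with g a' = c, w (a, a') := by
  rw [pushMass, ← sum_product', ← filter_product, univ_product_univ]
  simp only [Prod.ext_iff, Prod.map_fst, Prod.map_snd]

theorem pushMass_comp (g : B → C) (f : A → B) (μ : A → ℝ) [Fintype B] :
    pushMass g (pushMass f μ) = pushMass (g ∘ f) μ := by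
  funext c
  unfold pushMass
  convert sum_fiberwise_eq_sum_filter _ _ f μ using 2
  simp

theorem pushMass_id (μ : A → ℝ) : pushMass id μ = μ := by
  funext a
  simp [pushMass, sum_filter]

theorem klDiv_eq_sum_klTerm_jointMass (hμ : ∀ a, 0 ≤ μ a) :
    klDiv μ M L = ∑ p, klTerm (jointMass μ M p) (jointMass μ L p) := by
  rw [klDiv, Fintype.sum_prod_type]
  refine sum_congr rfl fun a _ => ?_
  rw [EReal.mul_sum_of_nonneg_of_ne_top (EReal.coe_nonneg.2 (hμ a)) (EReal.coe_ne_top _)]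
  exact sum_congr rfl fun a' _ => (klTerm_mul_left (hμ a) _ _).symm

theorem sum_klTerm_pushMass_le [Fintype B] (f : A → B) {u v : A → ℝ} (hu : ∀ a, 0 ≤ u a)
    (hv : ∀ a, 0 ≤ v a) :
    ∑ b, klTerm (pushMass f u b) (pushMass f v b) ≤ ∑ a, klTerm (u a) (v a) :=
  calc ∑ b, klTerm (pushMass f u b) (pushMass f v b)
      ≤ ∑ b, ∑ a with f a = b, klTerm (u a) (v a) :=
        sum_le_sum fun _ _ => klTerm_sum_le _ (fun a _ => hu a) (fun a _ => hv a)
    _ = ∑ a, klTerm (u a) (v a) := sum_fiberwise _ f _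

theorem jointMass_pushMass_pushMat (f : A → B) (hμ : ∀ a, 0 ≤ μ a) (M : A → A → ℝ) :
    jointMass (pushMass f μ) (pushMat f μ M) = pushMass (Prod.map f f) (jointMass μ M) := by
  funext ⟨b, b'⟩
  rw [jointMass, pushMat]
  -- on a fibre of mass zero both sides vanish, whatever the junk value `x / 0 = 0` of `pushMat`
  by_cases hb : pushMass f μ b = 0
  · have hμb : ∀ a, f a = b → μ a = 0 := fun a ha =>
      (sum_eq_zero_iff_of_nonneg fun a _ => hμ a).1 hb a (mem_filter.2 ⟨mem_univ a, ha⟩)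
    rw [hb, zero_mul, pushMass_prodMap, eq_comm]
    refine sum_eq_zero fun a ha => sum_eq_zero fun a' _ => ?_
    rw [jointMass, hμb a (mem_filter.1 ha).2, zero_mul]
  · exact mul_div_cancel₀ _ hb

theorem klDiv_pushMat_le [Fintype B] (f : A → B) (hμ : ∀ a, 0 ≤ μ a) (hM : ∀ a a', 0 ≤ M a a')
    (hL : ∀ a a', 0 ≤ L a a') :
    klDiv (pushMass f μ) (pushMat f μ M) (pushMat f μ L) ≤ klDiv μ M L := by
  rw [klDiv_eq_sum_klTerm_jointMass (pushMass_nonneg f hμ), klDiv_eq_sum_klTerm_jointMass hμ,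
    jointMass_pushMass_pushMat f hμ M, jointMass_pushMass_pushMat f hμ L]
  exact sum_klTerm_pushMass_le _ (jointMass_nonneg hμ hM) (jointMass_nonneg hμ hL)

theorem pushMat_comp [Fintype B] (g : B → C) (f : A → B) (hμ : ∀ a, 0 ≤ μ a)
    (M : A → A → ℝ) :
    pushMat g (pushMass f μ) (pushMat f μ M) = pushMat (g ∘ f) μ M := by
  funext c c'
  rw [pushMat, pushMat, jointMass_pushMass_pushMat f hμ M, pushMass_comp, pushMass_comp,
    Prod.map_comp_map]

theorem pushMat_id (hμ : ∀ a, μ a ≠ 0) : pushMat id μ M = M := by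
  funext a a'
  rw [pushMat, Prod.map_id, pushMass_id, pushMass_id, jointMass, mul_div_cancel_left₀ _ (hμ a)]

theorem pushMat_const (f : A → B) (μ : A → ℝ) {b : B} (hb : pushMass f μ b ≠ 0) :
    pushMat f μ (fun _ a' => μ a') b = pushMass f μ := by
  funext b'
  rw [pushMat, pushMass_prodMap]
  simp only [jointMass, ← sum_mul_sum]
  exact mul_div_cancel_left₀ _ hb

theorem klDiv_pushMat_comp_le [Fintype B] [Fintype C] (g : B → C) (f : A → B)
    (hμ : ∀ a, 0 ≤ μ a) (hM : ∀ a a', 0 ≤ M a a') (hL : ∀ a a', 0 ≤ L a a') :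
    klDiv (pushMass (g ∘ f) μ) (pushMat (g ∘ f) μ M) (pushMat (g ∘ f) μ L) ≤
      klDiv (pushMass f μ) (pushMat f μ M) (pushMat f μ L) := by
  rw [← pushMass_comp, ← pushMat_comp g f hμ M, ← pushMat_comp g f hμ L]
  exact klDiv_pushMat_le g (pushMass_nonneg f hμ) (pushMat_nonneg f hμ hM) (pushMat_nonneg f hμ hL)

theorem klDiv_pushMat_of_leftInverse [Fintype B] {g : B → A} {f : A → B}
    (hgf : Function.LeftInverse g f) (hμ : ∀ a, 0 < μ a) (hM : ∀ a a', 0 ≤ M a a')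
    (hL : ∀ a a', 0 ≤ L a a') :
    klDiv (pushMass f μ) (pushMat f μ M) (pushMat f μ L) = klDiv μ M L := by
  refine le_antisymm (klDiv_pushMat_le f (fun a => (hμ a).le) hM hL) ?_
  have := klDiv_pushMat_comp_le g f (fun a => (hμ a).le) hM hL
  rwa [hgf.comp_eq_id, pushMass_id, pushMat_id fun a => (hμ a).ne',
    pushMat_id fun a => (hμ a).ne'] at this

end Pushforward

section Restriction

variable {ι : Type*} [Fintype ι] [DecidableEq ι] {X : ι → Type*} [∀ i, Fintype (X i)]

theorem pushMass_restrict_prod (S : Finset ι) {g : ∀ i, X i → ℝ} (hg : ∀ i, ∑ t, g i t = 1)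
    (w : ∀ j : S, X j) : pushMass S.restrict (fun y => ∏ i, g i (y i)) w = ∏ j : S, g j (w j) :=
  calc pushMass S.restrict (fun y => ∏ i, g i (y i)) w
      = ∑ y ∈ Fintype.piFinset (fun i => if h : i ∈ S then {w ⟨i, h⟩} else univ),
          ∏ i, g i (y i) := by
        unfold pushMass
        congr 1
        ext y
        simp only [mem_filter, mem_univ, true_and, Fintype.mem_piFinset, funext_iff,
          Finset.restrict, Subtype.forall]
        refine forall_congr' fun i => ?_
        by_cases h : i ∈ S <;> simp [h]
    _ = ∏ j : S, g j (w j) := by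
        rw [← prod_univ_sum, univ_eq_attach, prod_attach_eq_prod_dite]
        refine prod_congr rfl fun i _ => ?_
        by_cases h : i ∈ S <;> simp [h, hg]

theorem pushMass_restrict_pos (S : Finset ι) [∀ i, Nonempty (X i)] {μ : (∀ i, X i) → ℝ}
    (hμ : ∀ x, 0 < μ x) (w : ∀ j : S, X j) : 0 < pushMass S.restrict μ w := by
  let x : ∀ i, X i := fun i => if h : i ∈ S then w ⟨i, h⟩ else Classical.arbitrary _
  have hx : S.restrict x = w := funext fun j => dif_pos j.2
  exact sum_pos' (fun y _ => (hμ y).le) ⟨x, by simp [hx], hμ x⟩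

theorem pushMat_restrict_prod (S : Finset ι) (μ : (∀ i, X i) → ℝ) {L : ∀ i, X i → X i → ℝ}
    (hL : ∀ i x, ∑ y, L i x y = 1) {w : ∀ j : S, X j} (hw : pushMass S.restrict μ w ≠ 0) :
    pushMat S.restrict μ (fun x y => ∏ i, L i (x i) (y i)) w =
      fun w' => ∏ j : S, L j (w j) (w' j) := by
  funext w'
  rw [pushMat, pushMass_prodMap, div_eq_iff hw, pushMass, mul_sum]
  refine sum_congr rfl fun x hx => ?_
  simp only [mem_filter, mem_univ, true_and] at hx
  simp only [jointMass]
  rw [← mul_sum, ← pushMass, pushMass_restrict_prod S (fun i => hL i (x i)), mul_comm, ← hx]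
  rfl

theorem klDiv_pushMat_restrict_mono {T S : Finset ι} (hTS : T ⊆ S) {μ : (∀ i, X i) → ℝ}
    (hμ : ∀ x, 0 ≤ μ x) {P M : (∀ i, X i) → (∀ i, X i) → ℝ} (hP : ∀ x y, 0 ≤ P x y)
    (hM : ∀ x y, 0 ≤ M x y) :
    klDiv (pushMass T.restrict μ) (pushMat T.restrict μ P) (pushMat T.restrict μ M) ≤
      klDiv (pushMass S.restrict μ) (pushMat S.restrict μ P) (pushMat S.restrict μ M) := by
  rw [← restrict₂_comp_restrict hTS]
  exact klDiv_pushMat_comp_le _ _ hμ hP hM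

theorem klDiv_pushMat_restrict_univ {μ : (∀ i, X i) → ℝ} (hμ : ∀ x, 0 < μ x)
    {P M : (∀ i, X i) → (∀ i, X i) → ℝ} (hP : ∀ x y, 0 ≤ P x y) (hM : ∀ x y, 0 ≤ M x y) :
    klDiv (pushMass univ.restrict μ) (pushMat univ.restrict μ P) (pushMat univ.restrict μ M) =
      klDiv μ P M :=
  klDiv_pushMat_of_leftInverse (g := fun w i => w ⟨i, mem_univ i⟩) (fun _ => rfl) hμ hP hM

end Restriction

theorem IsProbMass.nonempty {Y : Type*} [Fintype Y] {p : Y → ℝ} (hp : IsProbMass p) :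
    Nonempty Y := by
  obtain ⟨y, -⟩ := nonempty_of_sum_ne_zero (hp.2.symm ▸ one_ne_zero : ∑ y, p y ≠ 0)
  exact ⟨y⟩

theorem isTransMat_one {Y : Type*} [Fintype Y] [DecidableEq Y] : IsTransMat (1 : Matrix Y Y ℝ) :=
  ⟨fun x y => by by_cases h : x = y <;> simp [Matrix.one_apply, h],
    fun x => by simp [Matrix.one_apply]⟩

theorem exists_isTransMat_extend {ι : Type*} {X : ι → Type*} [∀ i, Fintype (X i)]
    (S : Finset ι) {L' : ∀ j : S, X j → X j → ℝ}
    (hL' : ∀ j, IsTransMat (L' j)) :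
    ∃ L : ∀ i, X i → X i → ℝ, (∀ i, IsTransMat (L i)) ∧ ∀ j : S, L j = L' j := by
  refine ⟨fun i => if h : i ∈ S then L' ⟨i, h⟩ else (1 : Matrix (X i) (X i) ℝ), fun i => ?_,
    fun j => dif_pos j.2⟩
  by_cases h : i ∈ S
  · simpa [h] using hL' ⟨i, h⟩
  · simpa [h] using isTransMat_one

section Coordinates

variable {d : ℕ} {X : Fin d → Type*} [∀ i, Fintype (X i)]

theorem margS_eq_pushMass (π : (∀ i, X i) → ℝ) (S : Finset (Fin d)) :
    margS π S = pushMass S.restrict π := by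
  funext w
  simp only [margS, pushMass, sum_filter, funext_iff, Finset.restrict]

theorem keepS_eq_pushMat (π : (∀ i, X i) → ℝ) (P : (∀ i, X i) → (∀ i, X i) → ℝ)
    (S : Finset (Fin d)) : keepS π P S = pushMat S.restrict π P := by
  funext w w'
  simp only [keepS, pushMat, pushMass_prodMap, margS_eq_pushMass, sum_filter, ite_and, jointMass,
    funext_iff, Finset.restrict, Finset.sum_ite_irrel, sum_const_zero]

variable {π : (∀ i, X i) → ℝ} [∀ i, Nonempty (X i)]

theorem klDiv_keepS_tensor (hpos : ∀ x, 0 < π x) (P : (∀ i, X i) → (∀ i, X i) → ℝ)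
    (S : Finset (Fin d)) {L : ∀ i, X i → X i → ℝ} (hL : ∀ i, IsTransMat (L i)) :
    klDiv (margS π S) (keepS π P S) (fun w w' => ∏ j : S, L j (w j) (w' j)) =
      klDiv (pushMass S.restrict π) (pushMat S.restrict π P)
        (pushMat S.restrict π (tensorMat L)) := by
  rw [margS_eq_pushMass, keepS_eq_pushMat]
  congr 1
  funext w
  exact (pushMat_restrict_prod S π (fun i => (hL i).2) (pushMass_restrict_pos S hpos w).ne').symm

theorem klDiv_keepS_const (hpos : ∀ x, 0 < π x) (P : (∀ i, X i) → (∀ i, X i) → ℝ)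
    (S : Finset (Fin d)) :
    klDiv (margS π S) (keepS π P S) (fun _ w' => margS π S w') =
      klDiv (pushMass S.restrict π) (pushMat S.restrict π P)
        (pushMat S.restrict π fun _ y => π y) := by
  rw [margS_eq_pushMass, keepS_eq_pushMat]
  congr 1
  funext w
  exact (pushMat_const _ _ (pushMass_restrict_pos S hpos w).ne').symm

theorem distIndepOn_keepS_eq_iInf (hpos : ∀ x, 0 < π x) (P : (∀ i, X i) → (∀ i, X i) → ℝ)
    (S : Finset (Fin d)) :
    distIndepOn S (margS π S) (keepS π P S) =
      ⨅ (L : ∀ i, X i → X i → ℝ) (_ : ∀ i, IsTransMat (L i)),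
        klDiv (pushMass S.restrict π) (pushMat S.restrict π P)
        (pushMat S.restrict π (tensorMat L)) := by
  refine le_antisymm (le_iInf₂ fun L hL => ?_) (le_iInf₂ fun L' hL' => ?_)
  · rw [← klDiv_keepS_tensor hpos P S hL]
    exact iInf₂_le (fun j : S => L j) fun j : S => hL j
  · obtain ⟨L, hL, hLS⟩ := exists_isTransMat_extend S hL'
    refine (iInf₂_le L hL).trans_eq ?_
    simp only [← klDiv_keepS_tensor hpos P S hL, hLS]

end Coordinates

theorem stmt18_general {d : ℕ} {X : Fin d → Type*} [∀ i, Fintype (X i)]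
    (T S : Finset (Fin d)) (hTS : T ⊆ S)
    (π : (∀ i, X i) → ℝ) (hπ : IsProbMass π) (hpos : ∀ x, 0 < π x)
    (P : (∀ i, X i) → (∀ i, X i) → ℝ) (hP : IsTransMat P) :
    (distIndepOn S (margS π S) (keepS π P S) ≤ distIndepKL π P ∧
        distIndepOn T (margS π T) (keepS π P T) ≤ distIndepOn S (margS π S) (keepS π P S)) ∧
      (klDiv (margS π S) (keepS π P S) (fun _ ys => margS π S ys) ≤
          klDiv π P (fun _ y => π y) ∧
        klDiv (margS π T) (keepS π P T) (fun _ ys => margS π T ys) ≤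
          klDiv (margS π S) (keepS π P S) (fun _ ys => margS π S ys)) ∧
      (T = Finset.univ → S = Finset.univ →
        (distIndepKL π P = distIndepOn S (margS π S) (keepS π P S) ∧
          distIndepOn S (margS π S) (keepS π P S) =
            distIndepOn T (margS π T) (keepS π P T) ∧
          klDiv π P (fun _ y => π y) =
            klDiv (margS π S) (keepS π P S) (fun _ ys => margS π S ys) ∧
          klDiv (margS π S) (keepS π P S) (fun _ ys => margS π S ys) =
            klDiv (margS π T) (keepS π P T) (fun _ ys => margS π T ys))) := by
  obtain ⟨x⟩ := hπ.nonempty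
  have : ∀ i, Nonempty (X i) := fun i => ⟨x i⟩
  have hπ0 : ∀ x, 0 ≤ π x := fun x => (hpos x).le
  have htensor : ∀ L : ∀ i, X i → X i → ℝ, (∀ i, IsTransMat (L i)) → ∀ x y, 0 ≤ tensorMat L x y :=
    fun L hL x y => prod_nonneg fun i _ => (hL i).1 _ _
  have hconst : ∀ x y : ∀ i, X i, 0 ≤ π y := fun _ y => hπ0 y
  simp only [distIndepOn_keepS_eq_iInf hpos P, klDiv_keepS_const hpos P]
  refine ⟨⟨iInf₂_mono fun L hL => klDiv_pushMat_le _ hπ0 hP.1 (htensor L hL),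
      iInf₂_mono fun L hL => klDiv_pushMat_restrict_mono hTS hπ0 hP.1 (htensor L hL)⟩,
    ⟨klDiv_pushMat_le _ hπ0 hP.1 hconst, klDiv_pushMat_restrict_mono hTS hπ0 hP.1 hconst⟩, ?_⟩
  rintro rfl rfl
  exact ⟨iInf_congr fun L => iInf_congr fun hL =>
      (klDiv_pushMat_restrict_univ hpos hP.1 (htensor L hL)).symm, rfl,
    (klDiv_pushMat_restrict_univ hpos hP.1 hconst).symm, rfl⟩

/-- Monotonicity of entropic functionals under projection: for `∅ ≠ T ⊆ S ⊆ ⟦d⟧` and a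
`π`-stationary `P`, the distance to independence and the KL divergence to the matrix `Π`
(each row equal to the stationary distribution) can only decrease when projecting onto
fewer coordinates; equalities hold when `T = S = ⟦d⟧`. -/
theorem stmt18 {d : ℕ} {X : Fin d → Type*} [∀ i, Fintype (X i)]
    (T S : Finset (Fin d)) (hT : T.Nonempty) (hTS : T ⊆ S)
    (π : (∀ i, X i) → ℝ) (hπ : IsProbMass π) (hpos : ∀ x, 0 < π x)
    (P : (∀ i, X i) → (∀ i, X i) → ℝ) (hP : IsTransMat P)
    (hstat : ∀ y, ∑ x : ∀ i, X i, π x * P x y = π y) :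
    (distIndepOn S (margS π S) (keepS π P S) ≤ distIndepKL π P ∧
        distIndepOn T (margS π T) (keepS π P T) ≤ distIndepOn S (margS π S) (keepS π P S)) ∧
      (klDiv (margS π S) (keepS π P S) (fun _ ys => margS π S ys) ≤
          klDiv π P (fun _ y => π y) ∧
        klDiv (margS π T) (keepS π P T) (fun _ ys => margS π T ys) ≤
          klDiv (margS π S) (keepS π P S) (fun _ ys => margS π S ys)) ∧
      (T = Finset.univ → S = Finset.univ →
        (distIndepKL π P = distIndepOn S (margS π S) (keepS π P S) ∧
          distIndepOn S (margS π S) (keepS π P S) =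
            distIndepOn T (margS π T) (keepS π P T) ∧
          klDiv π P (fun _ y => π y) =
            klDiv (margS π S) (keepS π P S) (fun _ ys => margS π S ys) ∧
          klDiv (margS π S) (keepS π P S) (fun _ ys => margS π S ys) =
            klDiv (margS π T) (keepS π P T) (fun _ ys => margS π T ys))) :=
  stmt18_general T S hTS π hπ hpos P hP
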